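/- arXiv:2306.01488 — 7 statements merged into one kernel-verified Lean document; each statement's English description precedes it below -/
import Mathlib

section
/- If G and H are connected finite simple graphs each of order at least two, then χ_i(G × H) ≤ χ_i(G) · χ_i(H). -/
open SimpleGraph Finset

variable {α β : Type*}

/-- The direct (tensor) product of two simple graphs. -/
def directProd (G : SimpleGraph α) (H : SimpleGraph β) : SimpleGraph (α × β) where
  Adj x y := G.Adj x.1 y.1 ∧ H.Adj x.2 y.2
  symm := ⟨fun x y h => ⟨h.1.symm, h.2.symm⟩⟩
  loopless := ⟨fun x h => G.irrefl h.1⟩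

/-- The strong product of two simple graphs. -/
def strongProd (G : SimpleGraph α) (H : SimpleGraph β) : SimpleGraph (α × β) where
  Adj x y := (x.1 = y.1 ∧ H.Adj x.2 y.2) ∨ (G.Adj x.1 y.1 ∧ x.2 = y.2) ∨
    (G.Adj x.1 y.1 ∧ H.Adj x.2 y.2)
  symm := by
    constructor
    rintro x y (⟨h1, h2⟩ | ⟨h1, h2⟩ | ⟨h1, h2⟩)
    · exact Or.inl ⟨h1.symm, h2.symm⟩
    · exact Or.inr (Or.inl ⟨h1.symm, h2.symm⟩)
    · exact Or.inr (Or.inr ⟨h1.symm, h2.symm⟩)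
  loopless := by
    constructor
    rintro x (⟨_, h⟩ | ⟨h, _⟩ | ⟨h, _⟩)
    · exact H.irrefl h
    · exact G.irrefl h
    · exact G.irrefl h

/-- The lexicographic product of two simple graphs. -/
def lexProd (G : SimpleGraph α) (H : SimpleGraph β) : SimpleGraph (α × β) where
  Adj x y := G.Adj x.1 y.1 ∨ (x.1 = y.1 ∧ H.Adj x.2 y.2)
  symm := by
    constructor
    rintro x y (h | ⟨h1, h2⟩)
    · exact Or.inl h.symm
    · exact Or.inr ⟨h1.symm, h2.symm⟩
  loopless := by
    constructor
    rintro x (h | ⟨_, h⟩)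
    · exact G.irrefl h
    · exact H.irrefl h

/-- The corona product `G ⊙ H`: vertex `(v, none)` is the vertex `v` of `G`, and
`(v, some h)` is the vertex `h` of the copy of `H` attached at `v`. -/
def corona (G : SimpleGraph α) (H : SimpleGraph β) : SimpleGraph (α × Option β) where
  Adj x y :=
    (x.2 = none ∧ y.2 = none ∧ G.Adj x.1 y.1) ∨
    (x.1 = y.1 ∧ x.2 = none ∧ y.2 ≠ none) ∨
    (x.1 = y.1 ∧ x.2 ≠ none ∧ y.2 = none) ∨
    (x.1 = y.1 ∧ ∃ a b, x.2 = some a ∧ y.2 = some b ∧ H.Adj a b)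
  symm := by
    constructor
    rintro x y (⟨h1, h2, h3⟩ | ⟨h1, h2, h3⟩ | ⟨h1, h2, h3⟩ | ⟨h1, a, b, h2, h3, h4⟩)
    · exact Or.inl ⟨h2, h1, h3.symm⟩
    · exact Or.inr (Or.inr (Or.inl ⟨h1.symm, h3, h2⟩))
    · exact Or.inr (Or.inl ⟨h1.symm, h3, h2⟩)
    · exact Or.inr (Or.inr (Or.inr ⟨h1.symm, b, a, h3, h2, h4.symm⟩))
  loopless := by
    constructor
    rintro x (⟨_, _, h⟩ | ⟨_, h1, h2⟩ | ⟨_, h1, h2⟩ | ⟨_, a, b, h2, h3, h4⟩)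
    · exact G.irrefl h
    · exact h2 h1
    · exact h1 h2
    · rw [h2] at h3
      injection h3 with h5
      subst h5
      exact H.irrefl h4

/-- `f` is an injective coloring of `G`: no vertex has two distinct neighbors
with the same color. -/
def IsInjColoring {V : Type*} (G : SimpleGraph V) {n : ℕ} (f : V → Fin n) : Prop :=
  ∀ v u w, G.Adj v u → G.Adj v w → u ≠ w → f u ≠ f w

/-- The injective chromatic number: the least `n` such that `G` admits an
injective coloring with `n` colors. -/
noncomputable def injChrom {V : Type*} (G : SimpleGraph V) : ℕ :=
  sInf {n | ∃ f : V → Fin n, IsInjColoring G f}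

/-- `f` is a 2-distance coloring of `G`: distinct vertices at distance at most
two get distinct colors. -/
def IsDistTwoColoring {V : Type*} (G : SimpleGraph V) {n : ℕ} (f : V → Fin n) : Prop :=
  ∀ u v, u ≠ v → (G.Adj u v ∨ ∃ w, G.Adj u w ∧ G.Adj w v) → f u ≠ f v

/-- The 2-distance chromatic number of `G`. -/
noncomputable def distTwoChrom {V : Type*} (G : SimpleGraph V) : ℕ :=
  sInf {n | ∃ f : V → Fin n, IsDistTwoColoring G f}

lemma injColoring_set_nonempty {V : Type*} [Fintype V] (K : SimpleGraph V) :
    ({n | ∃ f : V → Fin n, IsInjColoring K f} : Set ℕ).Nonempty :=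
  ⟨Fintype.card V, Fintype.equivFin V, fun _ u w _ _ huw h =>
    huw ((Fintype.equivFin V).injective h)⟩

/-- for connected finite graphs `G` and `H` of order at least two,
`χ_i(G × H) ≤ χ_i(G) · χ_i(H)`. -/
theorem injChrom_directProd_le {α β : Type*} [Fintype α] [Fintype β]
    (G : SimpleGraph α) (H : SimpleGraph β) (hG : G.Connected) (hH : H.Connected)
    (hcardG : 2 ≤ Fintype.card α) (hcardH : 2 ≤ Fintype.card β) :
    injChrom (directProd G H) ≤ injChrom G * injChrom H := by
  obtain ⟨f, hf⟩ := Nat.sInf_mem (injColoring_set_nonempty G)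
  obtain ⟨g, hg⟩ := Nat.sInf_mem (injColoring_set_nonempty H)
  apply Nat.sInf_le
  refine ⟨fun x => finProdFinEquiv (f x.1, g x.2), ?_⟩
  rintro ⟨a, b⟩ ⟨u, v⟩ ⟨u', v'⟩ hA hA' hne' heq
  obtain ⟨h1, h2⟩ : G.Adj a u ∧ H.Adj b v := hA
  obtain ⟨h1', h2'⟩ : G.Adj a u' ∧ H.Adj b v' := hA'
  have h := finProdFinEquiv.injective heq
  have hu : u = u' := by
    by_contra h'
    exact hf a u u' h1 h1' h' (congrArg Prod.fst h)
  have hv : v = v' := by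
    by_contra h'
    exact hg b v v' h2 h2' h' (congrArg Prod.snd h)
  exact hne' (by simp [hu, hv])
end

section
/- For all integers r, t ≥ 2, the injective chromatic number of the direct product of two odd cycles satisfies χ_i(C_{2r+1} × C_{2t+1}) = 5. -/
open SimpleGraph Finset

variable {α β : Type*}

open Fin.CommRing in
lemma myAdj_iff {m : ℕ} [NeZero m] (hm : 3 ≤ m) {v u : Fin m} :
    (cycleGraph m).Adj v u ↔ u = v + 1 ∨ u = v - 1 := by
  rw [cycleGraph_adj']
  have h1 : (1 : Fin m).val = 1 := by
    simp [Fin.val_one', Nat.mod_eq_of_lt (by omega : 1 < m)]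
  constructor
  · rintro (h | h)
    · right
      have h2 : v - u = 1 := Fin.ext (by rw [h, h1])
      have := sub_eq_iff_eq_add.mp h2
      rw [this]; ring_nf
    · left
      have h2 : u - v = 1 := Fin.ext (by rw [h, h1])
      have := sub_eq_iff_eq_add.mp h2
      rw [this]; ring
  · rintro (rfl | rfl)
    · right; simp [h1, Nat.mod_eq_of_lt (by omega : 1 < m)]
    · left; simp [h1, Nat.mod_eq_of_lt (by omega : 1 < m)]

open Fin.CommRing in
lemma plus_ne_minus {m : ℕ} [NeZero m] (hm : 3 ≤ m) (v : Fin m) : v + 1 ≠ v - 1 := by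
  intro h
  have h2 : (v + 1) - (v - 1) = 2 := by ring
  rw [h, sub_self] at h2
  have h3 := congrArg Fin.val h2
  have hv0 : (0 : Fin m).val = 0 := Fin.val_zero m
  have hv2 : (2 : Fin m).val = 2 % m := rfl
  rw [hv0, hv2, Nat.mod_eq_of_lt (by omega : 2 < m)] at h3
  omega

lemma no_four (r t : ℕ) (hr : 2 ≤ r) (ht : 2 ≤ t)
    (f : Fin (2*r+1) × Fin (2*t+1) → Fin 4)
    (hf : IsInjColoring (directProd (cycleGraph (2*r+1)) (cycleGraph (2*t+1))) f) :
    False := by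
  classical
  haveI : NeZero (2*r+1) := ⟨by omega⟩
  haveI : NeZero (2*t+1) := ⟨by omega⟩
  set G := directProd (cycleGraph (2*r+1)) (cycleGraph (2*t+1)) with hG
  -- each vertex has exactly 4 neighbors
  have hdeg : ∀ v : Fin (2*r+1) × Fin (2*t+1),
      (univ.filter (fun u => G.Adj v u)).card = 4 := by
    rintro ⟨i, j⟩
    have hi : i + 1 ≠ i - 1 := plus_ne_minus (by omega) i
    have hj : j + 1 ≠ j - 1 := plus_ne_minus (by omega) j
    have hset : univ.filter (fun u => G.Adj (i, j) u) =
        {(i+1, j+1), (i+1, j-1), (i-1, j+1), (i-1, j-1)} := by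
      ext ⟨a, b⟩
      simp only [mem_filter, mem_univ, true_and, mem_insert, mem_singleton, Prod.mk.injEq]
      rw [hG]
      show ((cycleGraph (2*r+1)).Adj i a ∧ (cycleGraph (2*t+1)).Adj j b) ↔ _
      rw [myAdj_iff (by omega), myAdj_iff (by omega)]
      tauto
    rw [hset]
    rw [card_insert_of_notMem (by simp [Prod.ext_iff, hi, hj]),
        card_insert_of_notMem (by simp [Prod.ext_iff, hi, hj]),
        card_insert_of_notMem (by simp [Prod.ext_iff, hi, hj]),
        card_singleton]
  -- each color class is small
  have hcount : ∀ c : Fin 4,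
      4 * (univ.filter (fun u => f u = c)).card ≤ (2*r+1)*(2*t+1) - 1 := by
    intro c
    have key : ∑ v : Fin (2*r+1) × Fin (2*t+1),
        (univ.filter (fun u => G.Adj v u ∧ f u = c)).card
        = 4 * (univ.filter (fun u => f u = c)).card := by
      have h1 : ∀ v, (univ.filter (fun u => G.Adj v u ∧ f u = c)).card
          = ∑ u : Fin (2*r+1) × Fin (2*t+1), if G.Adj v u ∧ f u = c then 1 else 0 := by
        intro v; rw [← card_filter]
      simp only [h1]
      rw [Finset.sum_comm]
      have h2 : ∀ u : Fin (2*r+1) × Fin (2*t+1),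
          (∑ v : Fin (2*r+1) × Fin (2*t+1), if G.Adj v u ∧ f u = c then 1 else 0)
          = if f u = c then 4 else 0 := by
        intro u
        by_cases hc : f u = c
        · simp only [hc, and_true, if_pos]
          rw [← card_filter]
          have : univ.filter (fun v => G.Adj v u) = univ.filter (fun v => G.Adj u v) := by
            apply filter_congr; intro v _; simp [G.adj_comm]
          rw [this, hdeg u]
        · simp [hc]
      simp only [h2]
      rw [← Finset.sum_filter, Finset.sum_const, smul_eq_mul, mul_comm]
    have hle : ∑ v : Fin (2*r+1) × Fin (2*t+1),
        (univ.filter (fun u => G.Adj v u ∧ f u = c)).card ≤ (2*r+1)*(2*t+1) := by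
      calc ∑ v : Fin (2*r+1) × Fin (2*t+1),
            (univ.filter (fun u => G.Adj v u ∧ f u = c)).card
          ≤ ∑ _v : Fin (2*r+1) × Fin (2*t+1), 1 := by
            apply Finset.sum_le_sum
            intro v _
            rw [Finset.card_le_one]
            intro a ha b hb
            simp only [mem_filter, mem_univ, true_and] at ha hb
            by_contra hab
            exact hf v a b ha.1 hb.1 hab (ha.2.trans hb.2.symm)
        _ = (2*r+1)*(2*t+1) := by
            rw [Finset.sum_const, smul_eq_mul, mul_one, card_univ, Fintype.card_prod,
              Fintype.card_fin, Fintype.card_fin]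
    rw [key] at hle
    have hodd : (2*r+1)*(2*t+1) = 4*(r*t)+2*r+2*t+1 := by ring
    omega
  -- total count
  have htot : ∑ c : Fin 4, (univ.filter (fun u => f u = c)).card = (2*r+1)*(2*t+1) := by
    rw [← Finset.card_eq_sum_card_fiberwise (fun x _ => mem_univ (f x))]
    rw [card_univ, Fintype.card_prod, Fintype.card_fin, Fintype.card_fin]
  have hfinal : 4 * ((2*r+1)*(2*t+1)) ≤ 4 * ((2*r+1)*(2*t+1) - 1) := by
    calc 4 * ((2*r+1)*(2*t+1)) = 4 * ∑ c : Fin 4, (univ.filter (fun u => f u = c)).card := by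
          rw [htot]
      _ = ∑ c : Fin 4, 4 * (univ.filter (fun u => f u = c)).card := by
          rw [Finset.mul_sum]
      _ ≤ ∑ _c : Fin 4, ((2*r+1)*(2*t+1) - 1) := Finset.sum_le_sum (fun c _ => hcount c)
      _ = 4 * ((2*r+1)*(2*t+1) - 1) := by
          rw [Finset.sum_const, smul_eq_mul, card_univ, Fintype.card_fin]
  have hodd : (2*r+1)*(2*t+1) = 4*(r*t)+2*r+2*t+1 := by ring
  omega

def Acol (r : ℕ) (i : Fin (2*r+1)) : ℕ :=
  ((i.val * (r+1)) % (2*r+1) + 3 * min ((i.val * (r+1)) % (2*r+1)) ((3*(2*r+1)) % 5)) % 5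

def Bcol (t : ℕ) (j : Fin (2*t+1)) : ℕ :=
  (2 * ((j.val * (t+1)) % (2*t+1)) + min ((j.val * (t+1)) % (2*t+1)) ((3*(2*t+1)) % 5)) % 5

lemma s_step (r : ℕ) (hr : 2 ≤ r) (i : Fin (2*r+1)) :
    ((i + 2 : Fin (2*r+1)).val * (r+1)) % (2*r+1) = ((i.val * (r+1)) % (2*r+1) + 1) % (2*r+1) := by
  have h2 : (2 : Fin (2*r+1)).val = 2 := by
    have : (2 : Fin (2*r+1)).val = 2 % (2*r+1) := rfl
    rw [this, Nat.mod_eq_of_lt (by omega)]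
  rw [Fin.add_def, h2]
  rw [Nat.mod_mul_mod]
  have : (i.val + 2) * (r + 1) = i.val * (r+1) + 1 + (2*r+1) := by ring
  rw [this, Nat.add_mod_right, Nat.mod_add_mod]

lemma stepA (r : ℕ) (hr : 2 ≤ r) (i : Fin (2*r+1)) :
    Acol r (i+2) = (Acol r i + 1) % 5 ∨ Acol r (i+2) = (Acol r i + 4) % 5 := by
  unfold Acol
  rw [s_step r hr i]
  set s := (i.val * (r+1)) % (2*r+1) with hs
  have hslt : s < 2*r+1 := Nat.mod_lt _ (by omega)
  by_cases h : s + 1 < 2*r+1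
  · rw [Nat.mod_eq_of_lt h]
    omega
  · have hse : s = 2*r := by omega
    rw [hse, Nat.mod_self]
    have hm : min (2*r) ((3*(2*r+1)) % 5) = (3*(2*r+1)) % 5 := min_eq_right (by omega)
    rw [hm]
    have hm0 : min 0 ((3*(2*r+1)) % 5) = 0 := min_eq_left (by omega)
    rw [hm0]
    omega

lemma stepB (t : ℕ) (ht : 2 ≤ t) (j : Fin (2*t+1)) :
    Bcol t (j+2) = (Bcol t j + 2) % 5 ∨ Bcol t (j+2) = (Bcol t j + 3) % 5 := by
  unfold Bcol
  rw [s_step t ht j]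
  set s := (j.val * (t+1)) % (2*t+1) with hs
  have hslt : s < 2*t+1 := Nat.mod_lt _ (by omega)
  by_cases h : s + 1 < 2*t+1
  · rw [Nat.mod_eq_of_lt h]
    omega
  · have hse : s = 2*t := by omega
    rw [hse, Nat.mod_self]
    have hm : min (2*t) ((3*(2*t+1)) % 5) = (3*(2*t+1)) % 5 := min_eq_right (by omega)
    rw [hm]
    have hm0 : min 0 ((3*(2*t+1)) % 5) = 0 := min_eq_left (by omega)
    rw [hm0]
    omega

lemma Acol_lt (r : ℕ) (i : Fin (2*r+1)) : Acol r i < 5 := Nat.mod_lt _ (by omega)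
lemma Bcol_lt (t : ℕ) (j : Fin (2*t+1)) : Bcol t j < 5 := Nat.mod_lt _ (by omega)

def fcol (r t : ℕ) (p : Fin (2*r+1) × Fin (2*t+1)) : Fin 5 :=
  ⟨(Acol r p.1 + Bcol t p.2) % 5, Nat.mod_lt _ (by omega)⟩

open Fin.CommRing in
lemma fcol_isInjColoring (r t : ℕ) (hr : 2 ≤ r) (ht : 2 ≤ t) :
    IsInjColoring (directProd (cycleGraph (2*r+1)) (cycleGraph (2*t+1))) (fcol r t) := by
  haveI : NeZero (2*r+1) := ⟨by omega⟩
  haveI : NeZero (2*t+1) := ⟨by omega⟩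
  rintro ⟨i, j⟩ ⟨u1, u2⟩ ⟨w1, w2⟩ hu hw hne
  obtain ⟨hu1, hu2⟩ : _ ∧ _ := hu
  obtain ⟨hw1, hw2⟩ : _ ∧ _ := hw
  rw [myAdj_iff (by omega)] at hu1 hu2 hw1 hw2
  simp only at hu1 hu2 hw1 hw2
  have hA : Acol r (i+1) = (Acol r (i-1) + 1) % 5 ∨ Acol r (i+1) = (Acol r (i-1) + 4) % 5 := by
    have := stepA r hr (i - 1)
    rwa [show i - 1 + 2 = i + 1 by ring] at this
  have hB : Bcol t (j+1) = (Bcol t (j-1) + 2) % 5 ∨ Bcol t (j+1) = (Bcol t (j-1) + 3) % 5 := by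
    have := stepB t ht (j - 1)
    rwa [show j - 1 + 2 = j + 1 by ring] at this
  have ha1 := Acol_lt r (i+1)
  have ha2 := Acol_lt r (i-1)
  have hb1 := Bcol_lt t (j+1)
  have hb2 := Bcol_lt t (j-1)
  rcases hu1 with rfl | rfl <;> rcases hu2 with rfl | rfl <;>
    rcases hw1 with rfl | rfl <;> rcases hw2 with rfl | rfl
  all_goals first
  | exact absurd rfl hne
  | · intro heq
      have hval := congrArg Fin.val heq
      simp only [fcol] at hval
      omega

/-- for `r, t ≥ 2`, `χ_i(C_{2r+1} × C_{2t+1}) = 5`. -/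
theorem injChrom_directProd_oddCycles (r t : ℕ) (hr : 2 ≤ r) (ht : 2 ≤ t) :
    injChrom (directProd (cycleGraph (2 * r + 1)) (cycleGraph (2 * t + 1))) = 5 := by
  apply le_antisymm
  · exact Nat.sInf_le ⟨fcol r t, fcol_isInjColoring r t hr ht⟩
  · have hmem : (5:ℕ) ∈ {n : ℕ | ∃ f : Fin (2*r+1) × Fin (2*t+1) → Fin n,
        IsInjColoring (directProd (cycleGraph (2*r+1)) (cycleGraph (2*t+1))) f} :=
      ⟨fcol r t, fcol_isInjColoring r t hr ht⟩
    apply le_csInf ⟨5, hmem⟩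
    rintro k ⟨f, hf⟩
    by_contra hk
    push_neg at hk
    have hle : k ≤ 4 := by omega
    apply no_four r t hr ht (fun v => Fin.castLE hle (f v))
    intro v u w hu hw hne heq
    exact hf v u w hu hw hne (Fin.castLE_injective hle heq)
end

section
/- For all integers m, n ≥ 4 that are both divisible by 4, the injective chromatic number of the direct product of cycles satisfies χ_i(C_m × C_n) = 4. -/
open SimpleGraph Finset

variable {α β : Type*}

section Helpers
open SimpleGraph
open Fin.CommRing

private lemma myVal_one (m : ℕ) (hm : 4 ≤ m) [NeZero m] : ((1:Fin m)).val = 1 := by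
  simp [Fin.val_one', Nat.mod_eq_of_lt (by omega : 1 < m)]

private lemma myVal_two (m : ℕ) (hm : 4 ≤ m) [NeZero m] : ((2:Fin m)).val = 2 := by
  rw [show (2:Fin m) = 1 + 1 by norm_num, Fin.val_add, myVal_one m hm]
  exact Nat.mod_eq_of_lt (by omega)

private lemma myAdj_cases (m : ℕ) (hm : 4 ≤ m) [NeZero m] {z x : Fin m}
    (h : (cycleGraph m).Adj z x) : x = z + 1 ∨ z = x + 1 := by
  rw [cycleGraph_adj'] at h
  rcases h with h | h
  · right; have hx : z - x = 1 := Fin.ext (by rw [h, myVal_one m hm])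
    rw [sub_eq_iff_eq_add.mp hx]; ring
  · left; have hx : x - z = 1 := Fin.ext (by rw [h, myVal_one m hm])
    rw [sub_eq_iff_eq_add.mp hx]; ring

private lemma myNbr_pair (m : ℕ) (hm : 4 ≤ m) [NeZero m] {z x y : Fin m}
    (hx : (cycleGraph m).Adj z x) (hy : (cycleGraph m).Adj z y) :
    x = y ∨ x = y + 2 ∨ y = x + 2 := by
  rcases myAdj_cases m hm hx with h1 | h1 <;> rcases myAdj_cases m hm hy with h2 | h2
  · left; rw [h1, h2]
  · right; left; rw [h1, h2]; ring
  · right; right; rw [h2, h1]; ring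
  · left; rw [h2] at h1; exact add_right_cancel h1.symm

private lemma myColor_flip (m : ℕ) (hm : 4 ≤ m) (hm4 : 4 ∣ m) [NeZero m] {x y : Fin m}
    (h : x = y + 2) : x.val / 2 % 2 ≠ y.val / 2 % 2 := by
  have hv : x.val = (y.val + 2) % m := by rw [h, Fin.val_add, myVal_two m hm]
  obtain ⟨k, rfl⟩ := hm4
  have h4 : x.val % 4 = (y.val + 2) % 4 := by
    rw [hv, Nat.mod_mod_of_dvd _ ⟨k, rfl⟩]
  omega

private lemma myAdj_one (m : ℕ) (hm : 4 ≤ m) [NeZero m] :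
    (cycleGraph m).Adj 0 1 := by
  rw [cycleGraph_adj']
  right; rw [sub_zero, myVal_one m hm]

private lemma myAdj_neg_one (m : ℕ) (hm : 4 ≤ m) [NeZero m] :
    (cycleGraph m).Adj 0 (-1) := by
  rw [cycleGraph_adj']
  left; rw [show (0 : Fin m) - (-1) = 1 by ring, myVal_one m hm]

private lemma myOne_ne_neg_one (m : ℕ) (hm : 4 ≤ m) [NeZero m] :
    (1 : Fin m) ≠ -1 := by
  intro h
  have h2 : (2 : Fin m) = 0 := by linear_combination h
  have := congrArg Fin.val h2
  rw [myVal_two m hm, Fin.val_zero] at this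
  omega

end Helpers

/-- if `m, n ≥ 4` are both divisible by `4`, then `χ_i(C_m × C_n) = 4`. -/
theorem injChrom_directProd_cycles_four (m n : ℕ) (hm : 4 ≤ m) (hn : 4 ≤ n)
    (hm4 : 4 ∣ m) (hn4 : 4 ∣ n) :
    injChrom (directProd (cycleGraph m) (cycleGraph n)) = 4 := by
  have : NeZero m := ⟨by omega⟩
  have : NeZero n := ⟨by omega⟩
  -- the coloring witnessing the upper bound
  set f : Fin m × Fin n → Fin 4 :=
    fun p => ⟨p.1.val / 2 % 2 * 2 + p.2.val / 2 % 2, by omega⟩ with hf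
  have hcol : IsInjColoring (directProd (cycleGraph m) (cycleGraph n)) f := by
    rintro v u w ⟨hu1, hu2⟩ ⟨hw1, hw2⟩ hne heq
    have e1 := myNbr_pair m hm hu1 hw1
    have e2 := myNbr_pair n hn hu2 hw2
    have hval : u.1.val / 2 % 2 * 2 + u.2.val / 2 % 2
        = w.1.val / 2 % 2 * 2 + w.2.val / 2 % 2 := congrArg Fin.val heq
    have hA : u.1.val / 2 % 2 = w.1.val / 2 % 2 ∧ u.2.val / 2 % 2 = w.2.val / 2 % 2 := by omega
    rcases e1 with h1 | h1 | h1
    · rcases e2 with h2 | h2 | h2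
      · exact hne (Prod.ext h1 h2)
      · exact myColor_flip n hn hn4 h2 hA.2
      · exact myColor_flip n hn hn4 h2 hA.2.symm
    · exact myColor_flip m hm hm4 h1 hA.1
    · exact myColor_flip m hm hm4 h1 hA.1.symm
  have hmem : 4 ∈ {k | ∃ g : Fin m × Fin n → Fin k,
      IsInjColoring (directProd (cycleGraph m) (cycleGraph n)) g} := ⟨f, hcol⟩
  refine le_antisymm (Nat.sInf_le hmem) (le_csInf ⟨4, hmem⟩ ?_)
  rintro b ⟨g, hg⟩
  by_contra hb
  push_neg at hb
  -- the four neighbors of (0,0)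
  have a1 : (directProd (cycleGraph m) (cycleGraph n)).Adj (0, 0) (1, 1) :=
    ⟨myAdj_one m hm, myAdj_one n hn⟩
  have a2 : (directProd (cycleGraph m) (cycleGraph n)).Adj (0, 0) (1, -1) :=
    ⟨myAdj_one m hm, myAdj_neg_one n hn⟩
  have a3 : (directProd (cycleGraph m) (cycleGraph n)).Adj (0, 0) (-1, 1) :=
    ⟨myAdj_neg_one m hm, myAdj_one n hn⟩
  have a4 : (directProd (cycleGraph m) (cycleGraph n)).Adj (0, 0) (-1, -1) :=
    ⟨myAdj_neg_one m hm, myAdj_neg_one n hn⟩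
  have hm1 := myOne_ne_neg_one m hm
  have hn1 := myOne_ne_neg_one n hn
  have d12 : ((1, 1) : Fin m × Fin n) ≠ (1, -1) := by
    intro h; exact hn1 (congrArg Prod.snd h)
  have d13 : ((1, 1) : Fin m × Fin n) ≠ (-1, 1) := by
    intro h; exact hm1 (congrArg Prod.fst h)
  have d14 : ((1, 1) : Fin m × Fin n) ≠ (-1, -1) := by
    intro h; exact hm1 (congrArg Prod.fst h)
  have d23 : ((1, -1) : Fin m × Fin n) ≠ (-1, 1) := by
    intro h; exact hm1 (congrArg Prod.fst h)
  have d24 : ((1, -1) : Fin m × Fin n) ≠ (-1, -1) := by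
    intro h; exact hm1 (congrArg Prod.fst h)
  have d34 : ((-1, 1) : Fin m × Fin n) ≠ (-1, -1) := by
    intro h; exact hn1 (congrArg Prod.snd h)
  have c12 := hg _ _ _ a1 a2 d12
  have c13 := hg _ _ _ a1 a3 d13
  have c14 := hg _ _ _ a1 a4 d14
  have c23 := hg _ _ _ a2 a3 d23
  have c24 := hg _ _ _ a2 a4 d24
  have c34 := hg _ _ _ a3 a4 d34
  have v12 : (g (1,1)).val ≠ (g (1,-1)).val := fun h => c12 (Fin.ext h)
  have v13 : (g (1,1)).val ≠ (g (-1,1)).val := fun h => c13 (Fin.ext h)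
  have v14 : (g (1,1)).val ≠ (g (-1,-1)).val := fun h => c14 (Fin.ext h)
  have v23 : (g (1,-1)).val ≠ (g (-1,1)).val := fun h => c23 (Fin.ext h)
  have v24 : (g (1,-1)).val ≠ (g (-1,-1)).val := fun h => c24 (Fin.ext h)
  have v34 : (g (-1,1)).val ≠ (g (-1,-1)).val := fun h => c34 (Fin.ext h)
  have l1 := (g ((1:Fin m),(1:Fin n))).isLt
  have l2 := (g ((1:Fin m),(-1:Fin n))).isLt
  have l3 := (g ((-1:Fin m),(1:Fin n))).isLt
  have l4 := (g ((-1:Fin m),(-1:Fin n))).isLt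
  omega
end

section
/- For every even integer m ≥ 4 with m ≠ 6 and every odd integer n ≥ 5, the injective chromatic number of the direct product of cycles satisfies χ_i(C_m × C_n) = 5. -/
open SimpleGraph Finset

variable {α β : Type*}

namespace InjCycleAux


def zig (A i : ℕ) : ZMod 5 := if i ≤ A then (i : ZMod 5) else ((2*A : ℕ) : ZMod 5) - (i : ZMod 5)

lemma zig_step (A i : ℕ) : zig A (i+1) - zig A i = 1 ∨ zig A (i+1) - zig A i = -1 := by
  unfold zig
  rcases le_or_gt (i+1) A with h | h
  · left; rw [if_pos h, if_pos (by omega)]; push_cast; ring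
  · rcases le_or_gt i A with h2 | h2
    · right
      have hiA : i = A := by omega
      subst hiA
      rw [if_neg (by omega), if_pos le_rfl]; push_cast; ring
    · right; rw [if_neg (by omega), if_neg (by omega)]; push_cast; ring

lemma zig_wrap (A l : ℕ) (h1 : A + 1 < l) (h2 : ((2*A : ℕ) : ZMod 5) = (l : ZMod 5)) :
    zig A 0 - zig A (l-1) = -1 := by
  unfold zig
  rw [if_pos (Nat.zero_le A), if_neg (by omega)]
  have hl : (((l-1 : ℕ)) : ZMod 5) = (l : ZMod 5) - 1 := by
    rw [Nat.cast_sub (by omega : 1 ≤ l), Nat.cast_one]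
  rw [h2, hl]
  push_cast
  ring

def Acoef (m : ℕ) : ℕ := if m = 4 then 1 else (3 * (m/2)) % 5

def Gc (m a : ℕ) : ZMod 5 := zig (Acoef m) (a / 2)

lemma Gstep2 (m : ℕ) (hme : 2 ∣ m) (hm : 4 ≤ m) (hm6 : m ≠ 6) (a : ℕ) (ha : a < m) :
    Gc m ((a+2) % m) - Gc m a = 1 ∨ Gc m ((a+2) % m) - Gc m a = -1 := by
  rcases lt_or_ge (a+2) m with h | h
  · rw [Nat.mod_eq_of_lt h]
    have hd : (a+2)/2 = a/2 + 1 := by omega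
    rw [Gc, Gc, hd]
    exact zig_step _ _
  · have h0 : (a+2) % m = a + 2 - m := by
      rw [Nat.mod_eq_sub_mod (by omega), Nat.mod_eq_of_lt (by omega)]
    have h1 : (a+2-m)/2 = 0 := by omega
    have h2 : a/2 = m/2 - 1 := by omega
    rw [Gc, Gc, h0, h1, h2]
    by_cases h4 : m = 4
    · subst h4; right; decide
    · right
      have hA : Acoef m = (3*(m/2)) % 5 := if_neg h4
      rw [hA]
      apply zig_wrap
      · have hk := Nat.mul_mod 3 (m/2) 5
        have h5 : (m/2) % 5 = 0 ∨ (m/2) % 5 = 1 ∨ (m/2) % 5 = 2 ∨ (m/2) % 5 = 3 ∨ (m/2) % 5 = 4 := by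
          omega
        rcases h5 with h'|h'|h'|h'|h' <;> rw [h'] at hk <;> omega
      · have h5 : (5 : ZMod 5) = 0 := by decide
        push_cast [ZMod.natCast_mod]
        linear_combination ((m/2 : ℕ) : ZMod 5) * h5


def Bcoef (n : ℕ) : ℕ := (3*n) % 5

def jfun (n b : ℕ) : ℕ := if b % 2 = 0 then b/2 else (n + b)/2

def Hc (n b : ℕ) : ZMod 5 := 2 * zig (Bcoef n) (jfun n b)

lemma Hstep2 (n : ℕ) (hno : ¬ 2 ∣ n) (hn : 5 ≤ n) (b : ℕ) (hb : b < n) :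
    Hc n ((b+2) % n) - Hc n b = 2 ∨ Hc n ((b+2) % n) - Hc n b = -2 := by
  have key : (jfun n ((b+2)%n) = jfun n b + 1) ∨ (jfun n b = n - 1 ∧ jfun n ((b+2)%n) = 0) := by
    rcases lt_or_ge (b+2) n with h | h
    · rw [Nat.mod_eq_of_lt h]
      left
      unfold jfun
      split_ifs <;> omega
    · have h0 : (b+2) % n = b + 2 - n := by
        rw [Nat.mod_eq_sub_mod (by omega), Nat.mod_eq_of_lt (by omega)]
      rw [h0]
      unfold jfun
      split_ifs <;> omega
  rcases key with h | ⟨h1, h2⟩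
  · rcases zig_step (Bcoef n) (jfun n b) with hs | hs
    · left
      rw [Hc, Hc, h]
      linear_combination (2 : ZMod 5) * hs
    · right
      rw [Hc, Hc, h]
      linear_combination (2 : ZMod 5) * hs
  · right
    rw [Hc, Hc, h1, h2]
    have hw : zig (Bcoef n) 0 - zig (Bcoef n) (n-1) = -1 := by
      apply zig_wrap
      · have hk := Nat.mul_mod 3 n 5
        have h5 : n % 5 = 0 ∨ n % 5 = 1 ∨ n % 5 = 2 ∨ n % 5 = 3 ∨ n % 5 = 4 := by omega
        rcases h5 with h'|h'|h'|h'|h' <;> rw [h'] at hk <;> simp [Bcoef] <;> omega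
      · have h5 : (5 : ZMod 5) = 0 := by decide
        rw [Bcoef]
        push_cast [ZMod.natCast_mod]
        linear_combination (n : ZMod 5) * h5
    linear_combination (2 : ZMod 5) * hw


/-- val-level relation describing adjacency on the cycle. -/
def relc (N x y : ℕ) : Prop := (x + 1) % N = y ∨ (y + 1) % N = x

lemma mod2' (x N : ℕ) (h0 : 0 < N) (h : x < 2*N) : x % N = if x < N then x else x - N := by
  split
  · exact Nat.mod_eq_of_lt (by assumption)
  · rw [Nat.mod_eq_sub_mod (by omega), Nat.mod_eq_of_lt (by omega)]

lemma adj_iff {N : ℕ} (hN : 2 ≤ N) (u v : Fin N) :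
    (cycleGraph N).Adj u v ↔ relc N u.val v.val := by
  rw [SimpleGraph.cycleGraph_adj']
  have hu := u.is_lt
  have hv := v.is_lt
  have h1 : (u - v).val = ((N - v.val) + u.val) % N := by rw [Fin.sub_def]
  have h2 : (v - u).val = ((N - u.val) + v.val) % N := by rw [Fin.sub_def]
  rw [relc, h1, h2, mod2' _ N (by omega) (by omega), mod2' _ N (by omega) (by omega),
    mod2' (u.val + 1) N (by omega) (by omega), mod2' (v.val + 1) N (by omega) (by omega)]
  split_ifs <;> omega

lemma rel_cases (N c a : ℕ) (hN : 1 ≤ N) (ha : a < N) (h : relc N c a) :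
    a = (c+1) % N ∨ a = (c + N - 1) % N := by
  rcases h with h | h
  · left; exact h.symm
  · right
    have e0 : c + N - 1 = (a+1) % N + (N - 1) := by omega
    rw [e0, Nat.mod_add_mod, show a + 1 + (N-1) = a + N from by omega,
      Nat.add_mod_right, Nat.mod_eq_of_lt ha]

lemma step_cases (N c a1 a2 : ℕ) (hN : 3 ≤ N) (h1 : a1 < N) (h2 : a2 < N)
    (r1 : relc N c a1) (r2 : relc N c a2) :
    a1 = a2 ∨ a2 = (a1 + 2) % N ∨ a1 = (a2 + 2) % N := by
  have key : ((c + N - 1) % N + 2) % N = (c+1) % N := by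
    rw [Nat.mod_add_mod, show c + N - 1 + 2 = c + 1 + N from by omega, Nat.add_mod_right]
  rcases rel_cases N c a1 (by omega) h1 r1 with e1 | e1 <;>
    rcases rel_cases N c a2 (by omega) h2 r2 with e2 | e2
  · left; rw [e1, e2]
  · right; right; rw [e1, e2, key]
  · right; left; rw [e1, e2, key]
  · left; rw [e1, e2]

lemma Gdiff (m a1 a2 c : ℕ) (hme : 2 ∣ m) (hm : 4 ≤ m) (hm6 : m ≠ 6)
    (h1 : a1 < m) (h2 : a2 < m) (r1 : relc m c a1) (r2 : relc m c a2) :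
    (a1 = a2 ∧ Gc m a1 - Gc m a2 = 0) ∨
      (Gc m a1 - Gc m a2 = 1 ∨ Gc m a1 - Gc m a2 = -1) := by
  rcases step_cases m c a1 a2 (by omega) h1 h2 r1 r2 with e | e | e
  · exact Or.inl ⟨e, by rw [e]; ring⟩
  · right
    rcases Gstep2 m hme hm hm6 a1 h1 with h | h
    · right; rw [e]; linear_combination -h
    · left; rw [e]; linear_combination -h
  · right
    rcases Gstep2 m hme hm hm6 a2 h2 with h | h
    · left; rw [e]; linear_combination h
    · right; rw [e]; linear_combination h

lemma Hdiff (n b1 b2 d : ℕ) (hno : ¬ 2 ∣ n) (hn : 5 ≤ n)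
    (h1 : b1 < n) (h2 : b2 < n) (r1 : relc n d b1) (r2 : relc n d b2) :
    (b1 = b2 ∧ Hc n b1 - Hc n b2 = 0) ∨
      (Hc n b1 - Hc n b2 = 2 ∨ Hc n b1 - Hc n b2 = -2) := by
  rcases step_cases n d b1 b2 (by omega) h1 h2 r1 r2 with e | e | e
  · exact Or.inl ⟨e, by rw [e]; ring⟩
  · right
    rcases Hstep2 n hno hn b1 h1 with h | h
    · right; rw [e]; linear_combination -h
    · left; rw [e]; linear_combination -h
  · right
    rcases Hstep2 n hno hn b2 h2 with h | h
    · left; rw [e]; linear_combination h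
    · right; rw [e]; linear_combination h


lemma exists_five (m n : ℕ) (hm : 4 ≤ m) (hme : 2 ∣ m) (hm6 : m ≠ 6)
    (hn : 5 ≤ n) (hno : ¬ 2 ∣ n) :
    ∃ f : Fin m × Fin n → Fin 5,
      IsInjColoring (directProd (cycleGraph m) (cycleGraph n)) f := by
  refine ⟨fun x => ⟨(Gc m x.1.val + Hc n x.2.val).val, ZMod.val_lt _⟩, ?_⟩
  intro v u w hvu hvw hne heq
  obtain ⟨hv1, hv2⟩ := hvu
  obtain ⟨hw1, hw2⟩ := hvw
  have r1 : relc m v.1.val u.1.val := (adj_iff (by omega) _ _).mp hv1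
  have r2 : relc m v.1.val w.1.val := (adj_iff (by omega) _ _).mp hw1
  have s1 : relc n v.2.val u.2.val := (adj_iff (by omega) _ _).mp hv2
  have s2 : relc n v.2.val w.2.val := (adj_iff (by omega) _ _).mp hw2
  have hval : Gc m u.1.val + Hc n u.2.val = Gc m w.1.val + Hc n w.2.val := by
    have h := congrArg Fin.val heq
    exact ZMod.val_injective 5 h
  have hsum : (Gc m u.1.val - Gc m w.1.val) + (Hc n u.2.val - Hc n w.2.val) = 0 := by
    linear_combination hval
  rcases Gdiff m u.1.val w.1.val v.1.val hme hm hm6 u.1.is_lt w.1.is_lt r1 r2 with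
      ⟨ea, eg⟩ | (eg | eg) <;>
    rcases Hdiff n u.2.val w.2.val v.2.val hno hn u.2.is_lt w.2.is_lt s1 s2 with
      ⟨eb, eh⟩ | (eh | eh) <;>
    rw [eg, eh] at hsum <;>
    first
      | exact hne (Prod.ext (Fin.ext ea) (Fin.ext eb))
      | exact absurd hsum (by decide)


def pt (m n : ℕ) (a b : ℕ) (ha : a < m) (hn : 0 < n) : Fin m × Fin n :=
  (⟨a, ha⟩, ⟨b % n, Nat.mod_lt _ hn⟩)

lemma adj_pt (m n : ℕ) (hm : 2 ≤ m) (hn2 : 2 ≤ n) (a b a' b' : ℕ) (ha : a < m) (ha' : a' < m)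
    (hn : 0 < n) (hr : relc m a a') (hs : relc n (b % n) (b' % n)) :
    (directProd (cycleGraph m) (cycleGraph n)).Adj (pt m n a b ha hn) (pt m n a' b' ha' hn) :=
  ⟨(adj_iff hm _ _).mpr hr, (adj_iff hn2 _ _).mpr hs⟩

lemma pt_ne_fst (m n a b a' b' : ℕ) (ha : a < m) (ha' : a' < m) (hn : 0 < n) (h : a ≠ a') :
    pt m n a b ha hn ≠ pt m n a' b' ha' hn :=
  fun he => h (congrArg (fun z : Fin m × Fin n => z.1.val) he)

lemma pt_ne_snd (m n a b a' b' : ℕ) (ha : a < m) (ha' : a' < m) (hn : 0 < n)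
    (h : b % n ≠ b' % n) : pt m n a b ha hn ≠ pt m n a' b' ha' hn :=
  fun he => h (congrArg (fun z : Fin m × Fin n => z.2.val) he)

lemma no4 (m n : ℕ) (hm : 4 ≤ m) (hn : 5 ≤ n) (hno : ¬ 2 ∣ n)
    (f : Fin m × Fin n → Fin 4)
    (hf : IsInjColoring (directProd (cycleGraph m) (cycleGraph n)) f) : False := by
  have hn0 : 0 < n := by omega
  have h0 : (0:ℕ) < m := by omega
  have h1 : (1:ℕ) < m := by omega
  have h2 : (2:ℕ) < m := by omega
  have hbne : ∀ k : ℕ, (2*k) % n ≠ (2*(k+1)) % n := by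
    intro k h
    have hd := (Nat.modEq_iff_dvd' (by omega : 2*k ≤ 2*(k+1))).mp h
    rw [show 2*(k+1) - 2*k = 2 from by omega] at hd
    exact absurd (Nat.le_of_dvd (by norm_num) hd) (by omega)
  have step : ∀ (k : ℕ) (c : Fin 4),
      (f (pt m n 0 (2*(k+1)) h0 hn0) = c ∨ f (pt m n 2 (2*(k+1)) h2 hn0) = c) ↔
        ¬(f (pt m n 0 (2*k) h0 hn0) = c ∨ f (pt m n 2 (2*k) h2 hn0) = c) := by
    intro k c
    have relm1 : relc m 1 0 := Or.inr (by norm_num [Nat.mod_eq_of_lt h1])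
    have relm2 : relc m 1 2 := Or.inl (by norm_num [Nat.mod_eq_of_lt h2])
    have relb1 : relc n ((2*k+1) % n) ((2*k) % n) := Or.inr (Nat.mod_add_mod (2*k) n 1)
    have relb2 : relc n ((2*k+1) % n) ((2*(k+1)) % n) := by
      left
      rw [Nat.mod_add_mod]
      congr 1
    have ax1 : (directProd (cycleGraph m) (cycleGraph n)).Adj (pt m n 1 (2*k+1) h1 hn0)
        (pt m n 0 (2*k) h0 hn0) := adj_pt m n (by omega) (by omega) _ _ _ _ _ _ _ relm1 relb1
    have ax2 : (directProd (cycleGraph m) (cycleGraph n)).Adj (pt m n 1 (2*k+1) h1 hn0)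
        (pt m n 2 (2*k) h2 hn0) := adj_pt m n (by omega) (by omega) _ _ _ _ _ _ _ relm2 relb1
    have ax3 : (directProd (cycleGraph m) (cycleGraph n)).Adj (pt m n 1 (2*k+1) h1 hn0)
        (pt m n 0 (2*(k+1)) h0 hn0) := adj_pt m n (by omega) (by omega) _ _ _ _ _ _ _ relm1 relb2
    have ax4 : (directProd (cycleGraph m) (cycleGraph n)).Adj (pt m n 1 (2*k+1) h1 hn0)
        (pt m n 2 (2*(k+1)) h2 hn0) := adj_pt m n (by omega) (by omega) _ _ _ _ _ _ _ relm2 relb2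
    have d12 : f (pt m n 0 (2*k) h0 hn0) ≠ f (pt m n 2 (2*k) h2 hn0) :=
      hf _ _ _ ax1 ax2 (pt_ne_fst _ _ _ _ _ _ _ _ _ (by omega))
    have d13 : f (pt m n 0 (2*k) h0 hn0) ≠ f (pt m n 0 (2*(k+1)) h0 hn0) :=
      hf _ _ _ ax1 ax3 (pt_ne_snd _ _ _ _ _ _ _ _ _ (hbne k))
    have d14 : f (pt m n 0 (2*k) h0 hn0) ≠ f (pt m n 2 (2*(k+1)) h2 hn0) :=
      hf _ _ _ ax1 ax4 (pt_ne_fst _ _ _ _ _ _ _ _ _ (by omega))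
    have d23 : f (pt m n 2 (2*k) h2 hn0) ≠ f (pt m n 0 (2*(k+1)) h0 hn0) :=
      hf _ _ _ ax2 ax3 (pt_ne_fst _ _ _ _ _ _ _ _ _ (by omega))
    have d24 : f (pt m n 2 (2*k) h2 hn0) ≠ f (pt m n 2 (2*(k+1)) h2 hn0) :=
      hf _ _ _ ax2 ax4 (pt_ne_snd _ _ _ _ _ _ _ _ _ (hbne k))
    have d34 : f (pt m n 0 (2*(k+1)) h0 hn0) ≠ f (pt m n 2 (2*(k+1)) h2 hn0) :=
      hf _ _ _ ax3 ax4 (pt_ne_fst _ _ _ _ _ _ _ _ _ (by omega))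
    have cover : ∀ z : Fin 4, z = f (pt m n 0 (2*k) h0 hn0) ∨ z = f (pt m n 2 (2*k) h2 hn0) ∨
        z = f (pt m n 0 (2*(k+1)) h0 hn0) ∨ z = f (pt m n 2 (2*(k+1)) h2 hn0) := by
      intro z
      have hcard : ({f (pt m n 0 (2*k) h0 hn0), f (pt m n 2 (2*k) h2 hn0),
          f (pt m n 0 (2*(k+1)) h0 hn0), f (pt m n 2 (2*(k+1)) h2 hn0)} : Finset (Fin 4)) =
          Finset.univ := by
        apply Finset.eq_univ_of_card
        rw [Finset.card_insert_of_notMem (by simp [d12, d13, d14]),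
          Finset.card_insert_of_notMem (by simp [d23, d24]),
          Finset.card_insert_of_notMem (by simp [d34]), Finset.card_singleton]
        simp
      have hz := hcard ▸ Finset.mem_univ z
      simpa using hz
    constructor
    · rintro (h | h) (h' | h')
      · exact d13 (h'.trans h.symm)
      · exact d23 (h'.trans h.symm)
      · exact d14 (h'.trans h.symm)
      · exact d24 (h'.trans h.symm)
    · intro hold
      rcases cover c with hc | hc | hc | hc
      · exact absurd (Or.inl hc.symm) hold
      · exact absurd (Or.inr hc.symm) hold
      · exact Or.inl hc.symm
      · exact Or.inr hc.symm
  set c := f (pt m n 0 (2*0) h0 hn0) with hc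
  have alt : ∀ k : ℕ,
      (f (pt m n 0 (2*k) h0 hn0) = c ∨ f (pt m n 2 (2*k) h2 hn0) = c) ↔ Even k := by
    intro k
    induction k with
    | zero => exact iff_of_true (Or.inl rfl) Even.zero
    | succ k ih =>
      rw [step k c, ih]
      exact (Nat.even_add_one).symm
  have hxn : pt m n 0 (2*n) h0 hn0 = pt m n 0 (2*0) h0 hn0 := by
    refine Prod.ext rfl (Fin.ext ?_)
    simp [pt, Nat.mul_mod_left]
  have hev : Even n := (alt n).mp (Or.inl (by rw [hxn]))
  exact hno hev.two_dvd

end InjCycleAux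


/-- for even `m ≥ 4` with `m ≠ 6` and odd `n ≥ 5`, `χ_i(C_m × C_n) = 5`. -/
theorem injChrom_directProd_cycles_five (m n : ℕ) (hm : 4 ≤ m) (hme : Even m)
    (hm6 : m ≠ 6) (hn : 5 ≤ n) (hno : Odd n) :
    injChrom (directProd (cycleGraph m) (cycleGraph n)) = 5 := by
  have hm2 : 2 ∣ m := hme.two_dvd
  have hn2 : ¬ 2 ∣ n := by
    intro h
    have := Nat.odd_iff.mp hno
    omega
  obtain ⟨f5, hf5⟩ := InjCycleAux.exists_five m n hm hm2 hm6 hn hn2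
  have h5 : 5 ∈ {k | ∃ f : Fin m × Fin n → Fin k,
      IsInjColoring (directProd (cycleGraph m) (cycleGraph n)) f} := ⟨f5, hf5⟩
  unfold injChrom
  apply le_antisymm
  · exact Nat.sInf_le h5
  · apply le_csInf ⟨5, h5⟩
    rintro k ⟨f, hf⟩
    by_contra hlt
    push_neg at hlt
    exact InjCycleAux.no4 m n hm hn hn2 (Fin.castLE (by omega) ∘ f)
      (fun v u w h1 h2 h3 he => hf v u w h1 h2 h3 (Fin.castLE_injective _ he))
end

section
/- For all integers s, t ≥ 2 one has χ_i(C_{4s+2} × C_{4t+2}) = 5, and for every integer t ≥ 2 one has χ_i(C_4 × C_{4t+2}) = 5. -/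
open SimpleGraph Finset

variable {α β : Type*}

private lemma modM' (a M : ℕ) (hM : 0 < M) (h : a < 2*M) :
    a % M = a ∧ a < M ∨ a % M = a - M ∧ M ≤ a := by
  rcases Nat.lt_or_ge a M with h'|h'
  · exact Or.inl ⟨Nat.mod_eq_of_lt h', h'⟩
  · exact Or.inr ⟨by rw [Nat.mod_eq_sub_mod h', Nat.mod_eq_of_lt (by omega)], h'⟩

private lemma adj_val {M : ℕ} (hM : 3 ≤ M) (x y : Fin M) :
    (cycleGraph M).Adj x y ↔
      (x.val = y.val + 1 ∨ y.val = x.val + 1 ∨ (x.val = 0 ∧ y.val = M - 1) ∨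
        (y.val = 0 ∧ x.val = M - 1)) := by
  rw [SimpleGraph.cycleGraph_adj']
  have hx := x.isLt; have hy := y.isLt
  rw [Fin.sub_def, Fin.sub_def]
  simp only [Fin.val_mk]
  have h1 := modM' (M - y.val + x.val) M (by omega) (by omega)
  have h2 := modM' (M - x.val + y.val) M (by omega) (by omega)
  omega

private lemma two_step {M : ℕ} (hM : 4 ≤ M) (hMe : M % 2 = 0) {u v w : Fin M}
    (h1 : (cycleGraph M).Adj v u) (h2 : (cycleGraph M).Adj v w) :
    u.val % 2 = w.val % 2 ∧
      (u.val / 2 = w.val / 2 ∨ u.val / 2 = w.val / 2 + 1 ∨ w.val / 2 = u.val / 2 + 1 ∨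
        (u.val / 2 = 0 ∧ w.val / 2 = M / 2 - 1) ∨ (w.val / 2 = 0 ∧ u.val / 2 = M / 2 - 1)) := by
  rw [adj_val (by omega)] at h1 h2
  have hu := u.isLt; have hv := v.isLt; have hw := w.isLt
  omega

/-- Folding of a cycle of odd length onto values `0..4`. -/
private def gn (j : ℕ) : ℕ := if j ≤ 2 then j else if j % 2 = 0 then 4 else 3

private lemma gn_le (j : ℕ) : gn j ≤ 4 := by unfold gn; split_ifs <;> omega

private lemma fold_rel {k : ℕ} (hk : 5 ≤ k) (hodd : k % 2 = 1) {a a' : ℕ} (ha : a < k)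
    (ha' : a' < k)
    (h : a = a' ∨ a = a' + 1 ∨ a' = a + 1 ∨ (a = 0 ∧ a' = k - 1) ∨ (a' = 0 ∧ a = k - 1)) :
    (gn a = gn a' ∧ a = a') ∨ gn a = (gn a' + 1) % 5 ∨ gn a = (gn a' + 4) % 5 := by
  unfold gn; split_ifs <;> omega

private lemma ub1 (s t : ℕ) (hs : 2 ≤ s) (ht : 2 ≤ t) :
    ∃ f : Fin (4*s+2) × Fin (4*t+2) → Fin 5,
      IsInjColoring (directProd (cycleGraph (4*s+2)) (cycleGraph (4*t+2))) f := by
  refine ⟨fun p => ⟨(gn (p.1.val / 2) + 2 * gn (p.2.val / 2)) % 5, by omega⟩, ?_⟩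
  rintro v u w ⟨h11, h12⟩ ⟨h21, h22⟩ hne
  obtain ⟨hp1, hr1⟩ := two_step (by omega) (by omega) h11 h21
  obtain ⟨hp2, hr2⟩ := two_step (by omega) (by omega) h12 h22
  have hu1 := u.1.isLt; have hu2 := u.2.isLt; have hw1 := w.1.isLt; have hw2 := w.2.isLt
  have hf1 := fold_rel (k := 2*s+1) (by omega) (by omega)
    (a := u.1.val/2) (a' := w.1.val/2) (by omega) (by omega) (by omega)
  have hf2 := fold_rel (k := 2*t+1) (by omega) (by omega)
    (a := u.2.val/2) (a' := w.2.val/2) (by omega) (by omega) (by omega)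
  have hne' : u.1.val ≠ w.1.val ∨ u.2.val ≠ w.2.val := by
    by_contra hc
    push_neg at hc
    exact hne (Prod.ext (Fin.ext hc.1) (Fin.ext hc.2))
  have g1 := gn_le (u.1.val/2); have g2 := gn_le (u.2.val/2)
  have g3 := gn_le (w.1.val/2); have g4 := gn_le (w.2.val/2)
  simp only [ne_eq, Fin.mk.injEq]
  omega

private lemma ub2 (t : ℕ) (ht : 2 ≤ t) :
    ∃ f : Fin 4 × Fin (4*t+2) → Fin 5,
      IsInjColoring (directProd (cycleGraph 4) (cycleGraph (4*t+2))) f := by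
  refine ⟨fun p => ⟨(3 * (p.1.val / 2) + gn (p.2.val / 2)) % 5, by omega⟩, ?_⟩
  rintro v u w ⟨h11, h12⟩ ⟨h21, h22⟩ hne
  obtain ⟨hp1, hr1⟩ := two_step (by omega) (by omega) h11 h21
  obtain ⟨hp2, hr2⟩ := two_step (by omega) (by omega) h12 h22
  have hu1 := u.1.isLt; have hu2 := u.2.isLt; have hw1 := w.1.isLt; have hw2 := w.2.isLt
  have hf2 := fold_rel (k := 2*t+1) (by omega) (by omega)
    (a := u.2.val/2) (a' := w.2.val/2) (by omega) (by omega) (by omega)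
  have hne' : u.1.val ≠ w.1.val ∨ u.2.val ≠ w.2.val := by
    by_contra hc
    push_neg at hc
    exact hne (Prod.ext (Fin.ext hc.1) (Fin.ext hc.2))
  have g2 := gn_le (u.2.val/2); have g4 := gn_le (w.2.val/2)
  simp only [ne_eq, Fin.mk.injEq]
  omega

private lemma indep_cycle_bound (t : ℕ) (ht : 1 ≤ t) (B : Finset ℕ)
    (hlt : ∀ a ∈ B, a < 2*t+1)
    (hind : ∀ a ∈ B, ∀ b ∈ B, a ≠ b →
      ¬(a = b + 1 ∨ b = a + 1 ∨ (a = 0 ∧ b = 2*t) ∨ (b = 0 ∧ a = 2*t))) :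
    B.card ≤ t := by
  classical
  have hmod : ∀ a ∈ B, ((a+1) % (2*t+1) = a+1 ∧ a + 1 < 2*t+1) ∨
      ((a+1) % (2*t+1) = 0 ∧ a = 2*t) := by
    intro a ha
    rcases Nat.lt_or_ge (a+1) (2*t+1) with h|h
    · exact Or.inl ⟨Nat.mod_eq_of_lt h, h⟩
    · have he : a + 1 = 2*t+1 := by have := hlt a ha; omega
      rw [he]
      exact Or.inr ⟨Nat.mod_self _, by omega⟩
  have hcard : (B.biUnion fun a => ({a, (a+1) % (2*t+1)} : Finset ℕ)).card = 2 * B.card := by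
    rw [Finset.card_biUnion]
    · rw [Finset.sum_congr rfl (g := fun _ => 2) (fun a ha => ?_), Finset.sum_const,
        smul_eq_mul, mul_comm]
      exact Finset.card_pair (by rcases hmod a ha with ⟨h,h'⟩|⟨h,h'⟩ <;> omega)
    · intro a ha b hb hab
      have h1 := hmod a ha
      have h2 := hmod b hb
      have h3 := hind a ha b hb hab
      have h4 := hlt a ha
      have h5 := hlt b hb
      simp only [Finset.disjoint_left, Finset.mem_insert, Finset.mem_singleton]
      rintro x hx hy
      omega
  have hsub : (B.biUnion fun a => ({a, (a+1) % (2*t+1)} : Finset ℕ)) ⊆ Finset.range (2*t+1) := by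
    intro x hx
    simp only [Finset.mem_biUnion, Finset.mem_insert, Finset.mem_singleton] at hx
    obtain ⟨a, ha, hx⟩ := hx
    have := hlt a ha
    have := hmod a ha
    rw [Finset.mem_range]
    omega
  have := Finset.card_le_card hsub
  rw [hcard, Finset.card_range] at this
  omega

private lemma lb (M t : ℕ) (hM : 4 ≤ M) (hMe : M % 2 = 0) (ht : 2 ≤ t) :
    ¬ ∃ f : Fin M × Fin (4*t+2) → Fin 4,
      IsInjColoring (directProd (cycleGraph M) (cycleGraph (4*t+2))) f := by
  rintro ⟨f, hf⟩
  set φ : Fin 2 × Fin (2*t+1) → Fin M × Fin (4*t+2) :=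
    fun p => (⟨2*p.1.val, by have := p.1.isLt; omega⟩, ⟨2*p.2.val, by have := p.2.isLt; omega⟩)
    with hφ
  have hφinj : Function.Injective φ := by
    intro p q h
    rw [hφ, Prod.ext_iff, Fin.ext_iff, Fin.ext_iff] at h
    simp only [Fin.val_mk] at h
    rw [Prod.ext_iff, Fin.ext_iff, Fin.ext_iff]
    omega
  have key : ∀ p q : Fin 2 × Fin (2*t+1), p ≠ q →
      (p.2.val = q.2.val ∨ p.2.val = q.2.val + 1 ∨ q.2.val = p.2.val + 1 ∨
       (p.2.val = 0 ∧ q.2.val = 2*t) ∨ (q.2.val = 0 ∧ p.2.val = 2*t)) →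
      f (φ p) ≠ f (φ q) := by
    intro p q hpq hrel
    have h2p := p.2.isLt
    have h2q := q.2.isLt
    have h1p := p.1.isLt
    have h1q := q.1.isLt
    have hφne : φ p ≠ φ q := fun h => hpq (hφinj h)
    rcases hrel with h|h|h|h|h
    · exact hf (⟨1, by omega⟩, ⟨2*p.2.val+1, by omega⟩) (φ p) (φ q)
        ⟨(adj_val (by omega) _ _).mpr (by simp only [hφ, Fin.val_mk, true_or, or_true] <;> omega),
         (adj_val (by omega) _ _).mpr (by simp only [hφ, Fin.val_mk, true_or, or_true] <;> omega)⟩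
        ⟨(adj_val (by omega) _ _).mpr (by simp only [hφ, Fin.val_mk, true_or, or_true] <;> omega),
         (adj_val (by omega) _ _).mpr (by simp only [hφ, Fin.val_mk, true_or, or_true] <;> omega)⟩
        hφne
    · exact hf (⟨1, by omega⟩, ⟨2*q.2.val+1, by omega⟩) (φ p) (φ q)
        ⟨(adj_val (by omega) _ _).mpr (by simp only [hφ, Fin.val_mk, true_or, or_true] <;> omega),
         (adj_val (by omega) _ _).mpr (by simp only [hφ, Fin.val_mk, true_or, or_true] <;> omega)⟩
        ⟨(adj_val (by omega) _ _).mpr (by simp only [hφ, Fin.val_mk, true_or, or_true] <;> omega),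
         (adj_val (by omega) _ _).mpr (by simp only [hφ, Fin.val_mk, true_or, or_true] <;> omega)⟩
        hφne
    · exact hf (⟨1, by omega⟩, ⟨2*p.2.val+1, by omega⟩) (φ p) (φ q)
        ⟨(adj_val (by omega) _ _).mpr (by simp only [hφ, Fin.val_mk, true_or, or_true] <;> omega),
         (adj_val (by omega) _ _).mpr (by simp only [hφ, Fin.val_mk, true_or, or_true] <;> omega)⟩
        ⟨(adj_val (by omega) _ _).mpr (by simp only [hφ, Fin.val_mk, true_or, or_true] <;> omega),
         (adj_val (by omega) _ _).mpr (by simp only [hφ, Fin.val_mk, true_or, or_true] <;> omega)⟩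
        hφne
    · exact hf (⟨1, by omega⟩, ⟨4*t+1, by omega⟩) (φ p) (φ q)
        ⟨(adj_val (by omega) _ _).mpr (by simp only [hφ, Fin.val_mk, true_or, or_true] <;> omega),
         (adj_val (by omega) _ _).mpr (by simp only [hφ, Fin.val_mk, true_or, or_true] <;> omega)⟩
        ⟨(adj_val (by omega) _ _).mpr (by simp only [hφ, Fin.val_mk, true_or, or_true] <;> omega),
         (adj_val (by omega) _ _).mpr (by simp only [hφ, Fin.val_mk, true_or, or_true] <;> omega)⟩
        hφne
    · exact hf (⟨1, by omega⟩, ⟨4*t+1, by omega⟩) (φ p) (φ q)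
        ⟨(adj_val (by omega) _ _).mpr (by simp only [hφ, Fin.val_mk, true_or, or_true] <;> omega),
         (adj_val (by omega) _ _).mpr (by simp only [hφ, Fin.val_mk, true_or, or_true] <;> omega)⟩
        ⟨(adj_val (by omega) _ _).mpr (by simp only [hφ, Fin.val_mk, true_or, or_true] <;> omega),
         (adj_val (by omega) _ _).mpr (by simp only [hφ, Fin.val_mk, true_or, or_true] <;> omega)⟩
        hφne
  classical
  obtain ⟨c, hc⟩ : ∃ c : Fin 4, t+1 ≤ (univ.filter (fun p => f (φ p) = c)).card := by
    by_contra hcon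
    push_neg at hcon
    have hfib := Finset.card_eq_sum_card_fiberwise
      (f := fun p => f (φ p)) (s := (univ : Finset (Fin 2 × Fin (2*t+1)))) (t := univ)
      (fun x _ => Finset.mem_univ _)
    have hsum : ∑ c : Fin 4, (univ.filter (fun p => f (φ p) = c)).card ≤ ∑ _c : Fin 4, t :=
      Finset.sum_le_sum (fun c _ => by have := hcon c; omega)
    rw [Finset.sum_const, Finset.card_univ, smul_eq_mul] at hsum
    rw [Finset.card_univ] at hfib
    simp only [Fintype.card_prod, Fintype.card_fin, Fintype.card_fin] at hfib hsum
    omega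
  set S := univ.filter (fun p => f (φ p) = c) with hSdef
  have hSmem : ∀ p ∈ S, f (φ p) = c := by
    intro p hp
    exact (Finset.mem_filter.mp hp).2
  have hS : ∀ p ∈ S, ∀ q ∈ S, p ≠ q →
      ¬(p.2.val = q.2.val ∨ p.2.val = q.2.val + 1 ∨ q.2.val = p.2.val + 1 ∨
        (p.2.val = 0 ∧ q.2.val = 2*t) ∨ (q.2.val = 0 ∧ p.2.val = 2*t)) := by
    intro p hp q hq hpq hrel
    exact key p q hpq hrel ((hSmem p hp).trans (hSmem q hq).symm)
  have hinj2 : Set.InjOn (fun p : Fin 2 × Fin (2*t+1) => p.2.val) ↑S := by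
    intro p hp q hq h
    by_contra hne
    exact hS p (Finset.mem_coe.mp hp) q (Finset.mem_coe.mp hq) hne (Or.inl h)
  set B := S.image (fun p => p.2.val) with hB
  have hBcard : B.card = S.card := Finset.card_image_of_injOn hinj2
  have hbound : B.card ≤ t := by
    apply indep_cycle_bound t (by omega)
    · intro a ha
      rw [hB, Finset.mem_image] at ha
      obtain ⟨p, _, hpa⟩ := ha
      have := p.2.isLt
      omega
    · intro a ha b hb hab
      rw [hB, Finset.mem_image] at ha hb
      obtain ⟨p, hp, hpa⟩ := ha
      obtain ⟨q, hq, hqb⟩ := hb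
      have hpq : p ≠ q := fun h => hab (by rw [← hpa, ← hqb, h])
      have := hS p hp q hq hpq
      omega
  omega

private lemma injChrom_eq_five {V : Type*} (G : SimpleGraph V)
    (h5 : ∃ f : V → Fin 5, IsInjColoring G f)
    (h4 : ¬ ∃ f : V → Fin 4, IsInjColoring G f) : injChrom G = 5 := by
  refine le_antisymm (Nat.sInf_le h5) (le_csInf ⟨5, h5⟩ ?_)
  rintro n ⟨f, hfc⟩
  by_contra hlt
  push_neg at hlt
  exact h4 ⟨fun v => Fin.castLE (by omega) (f v), fun v u w h1 h2 hne heq =>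
    hfc v u w h1 h2 hne (Fin.castLE_injective _ heq)⟩

/-- `χ_i(C_{4s+2} × C_{4t+2}) = 5` for `s, t ≥ 2`, and
`χ_i(C_4 × C_{4t+2}) = 5` for `t ≥ 2`. -/
theorem injChrom_directProd_cycles_five' :
    (∀ s t : ℕ, 2 ≤ s → 2 ≤ t →
      injChrom (directProd (cycleGraph (4 * s + 2)) (cycleGraph (4 * t + 2))) = 5) ∧
    (∀ t : ℕ, 2 ≤ t →
      injChrom (directProd (cycleGraph 4) (cycleGraph (4 * t + 2))) = 5) := by
  constructor
  · intro s t hs ht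
    exact injChrom_eq_five _ (ub1 s t hs ht) (lb (4*s+2) t (by omega) (by omega) ht)
  · intro t ht
    exact injChrom_eq_five _ (ub2 t ht) (lb 4 t (by omega) (by omega) ht)
end

section
/- For every integer s ≥ 1 and every n ∈ {3, 6}, the injective chromatic number of the direct product of cycles satisfies χ_i(C_{4s} × C_n) = 6. -/
open SimpleGraph Finset

variable {α β : Type*}

-- helper: extract val form of adjacency in cycleGraph m
lemma adj_cycle_val {m : ℕ} (hm : 2 ≤ m) {u v : Fin m} (h : (cycleGraph m).Adj u v) :
    u.val = (v.val + 1) % m ∨ v.val = (u.val + 1) % m := by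
  haveI : NeZero m := ⟨by omega⟩
  have h1 : (1 : Fin m).val = 1 := by rw [Fin.val_one']; exact Nat.mod_eq_of_lt (by omega)
  rcases cycleGraph_adj'.mp h with h' | h'
  · left
    have e : u - v = 1 := Fin.ext (by rw [h1, h'])
    have e2 : u = v + 1 := by
      rw [sub_eq_iff_eq_add] at e; rw [e, add_comm]
    rw [e2, Fin.val_add, h1]
  · right
    have e : v - u = 1 := Fin.ext (by rw [h1, h'])
    have e2 : v = u + 1 := by
      rw [sub_eq_iff_eq_add] at e; rw [e, add_comm]
    rw [e2, Fin.val_add, h1]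

lemma mod_succ_cases {a m : ℕ} (h : a < m) :
    (a + 1 = m ∧ (a + 1) % m = 0) ∨ (a + 1 < m ∧ (a + 1) % m = a + 1) := by
  rcases Nat.lt_or_ge (a + 1) m with h' | h'
  · exact Or.inr ⟨h', Nat.mod_eq_of_lt h'⟩
  · have e : a + 1 = m := by omega
    exact Or.inl ⟨e, by rw [e, Nat.mod_self]⟩

lemma nat_g_aux {s x y z : ℕ} (hs : 1 ≤ s) (hx : x < 4 * s) (hy : y < 4 * s) (hz : z < 4 * s)
    (hy' : y = (x + 1) % (4 * s) ∨ x = (y + 1) % (4 * s))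
    (hz' : z = (x + 1) % (4 * s) ∨ x = (z + 1) % (4 * s))
    (hne : y ≠ z) : (y / 2) % 2 ≠ (z / 2) % 2 := by
  have e1 := mod_succ_cases hx
  have e2 := mod_succ_cases hy
  have e3 := mod_succ_cases hz
  omega

lemma colg {s : ℕ} (hs : 1 ≤ s) {v u w : Fin (4 * s)}
    (hu : (cycleGraph (4 * s)).Adj v u) (hw : (cycleGraph (4 * s)).Adj v w) (hne : u ≠ w) :
    (u.val / 2) % 2 ≠ (w.val / 2) % 2 := by
  have hm : 2 ≤ 4 * s := by omega
  have h1 := adj_cycle_val hm hu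
  have h2 := adj_cycle_val hm hw
  exact nat_g_aux hs v.isLt u.isLt w.isLt (by tauto) (by tauto)
    (fun h => hne (Fin.ext h))

lemma row3 : ∀ v u w : Fin 3, (cycleGraph 3).Adj v u → (cycleGraph 3).Adj v w →
    u ≠ w → u.val % 3 ≠ w.val % 3 := by decide

lemma row6 : ∀ v u w : Fin 6, (cycleGraph 6).Adj v u → (cycleGraph 6).Adj v w →
    u ≠ w → u.val % 3 ≠ w.val % 3 := by decide

lemma upper_bound (s n : ℕ) (hs : 1 ≤ s)
    (rowL : ∀ v u w : Fin n, (cycleGraph n).Adj v u → (cycleGraph n).Adj v w →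
      u ≠ w → u.val % 3 ≠ w.val % 3) :
    ∃ f : Fin (4 * s) × Fin n → Fin 6,
      IsInjColoring (directProd (cycleGraph (4 * s)) (cycleGraph n)) f := by
  refine ⟨fun p => ⟨3 * ((p.1.val / 2) % 2) + p.2.val % 3, by omega⟩, ?_⟩
  intro v u w hu hw hne hf
  obtain ⟨hu1, hu2⟩ := hu
  obtain ⟨hw1, hw2⟩ := hw
  have hval : 3 * ((u.1.val / 2) % 2) + u.2.val % 3
      = 3 * ((w.1.val / 2) % 2) + w.2.val % 3 := congrArg Fin.val hf
  by_cases h1 : u.1 = w.1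
  · have h2 : u.2 ≠ w.2 := fun h => hne (Prod.ext h1 h)
    exact rowL v.2 u.2 w.2 hu2 hw2 h2 (by omega)
  · exact colg hs hu1 hw1 h1 (by omega)


lemma adj_cycle_mk {m : ℕ} (a : ℕ) (h1 : a + 1 < m) :
    (cycleGraph m).Adj ⟨a + 1, h1⟩ ⟨a, by omega⟩ := by
  rw [cycleGraph_adj']
  left
  rw [Fin.sub_def]
  simp only
  have : m - a + (a + 1) = m + 1 := by omega
  rw [this, Nat.add_mod_left, Nat.mod_eq_of_lt (by omega)]

lemma lower_bound3 {s k : ℕ} (hs : 1 ≤ s) (f : Fin (4 * s) × Fin 3 → Fin k)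
    (hf : ∀ v u w : Fin (4 * s) × Fin 3,
      ((cycleGraph (4 * s)).Adj v.1 u.1 ∧ (cycleGraph 3).Adj v.2 u.2) →
      ((cycleGraph (4 * s)).Adj v.1 w.1 ∧ (cycleGraph 3).Adj v.2 w.2) →
      u ≠ w → f u ≠ f w) : 6 ≤ k := by
  have h0 : (0:ℕ) < 4 * s := by omega
  have h1 : (1:ℕ) < 4 * s := by omega
  have h2 : (2:ℕ) < 4 * s := by omega
  set c0 : Fin (4 * s) := ⟨0, h0⟩ with hc0
  set c1 : Fin (4 * s) := ⟨1, h1⟩ with hc1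
  set c2 : Fin (4 * s) := ⟨2, h2⟩ with hc2
  have A10 : (cycleGraph (4 * s)).Adj c1 c0 := adj_cycle_mk 0 h1
  have A12 : (cycleGraph (4 * s)).Adj c1 c2 := (adj_cycle_mk 1 h2).symm
  have hc : c0 ≠ c2 := fun h => by simp [hc0, hc2, Fin.ext_iff] at h
  have neRow : ∀ (a b : Fin (4 * s)) (p q : Fin 3), p ≠ q → (a, p) ≠ (b, q) :=
    fun a b p q h hh => h (congrArg Prod.snd hh)
  have neCol : ∀ (p q : Fin 3), ((c0, p) : Fin (4 * s) × Fin 3) ≠ (c2, q) :=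
    fun p q hh => hc (congrArg Prod.fst hh)
  have key : ∀ (a b : Fin (4 * s)) (p q mr : Fin 3),
      (cycleGraph (4 * s)).Adj c1 a → (cycleGraph (4 * s)).Adj c1 b →
      (cycleGraph 3).Adj mr p → (cycleGraph 3).Adj mr q →
      (a, p) ≠ (b, q) → f (a, p) ≠ f (b, q) :=
    fun a b p q mr x1 x2 x3 x4 x5 => hf (c1, mr) (a, p) (b, q) ⟨x1, x3⟩ ⟨x2, x4⟩ x5
  -- 15 distinctness facts; rows 0 1 2 of Fin 3
  have d1 : f (c0,0) ≠ f (c0,1) := key c0 c0 0 1 2 A10 A10 (by decide) (by decide) (neRow _ _ _ _ (by decide))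
  have d2 : f (c0,0) ≠ f (c0,2) := key c0 c0 0 2 1 A10 A10 (by decide) (by decide) (neRow _ _ _ _ (by decide))
  have d3 : f (c0,1) ≠ f (c0,2) := key c0 c0 1 2 0 A10 A10 (by decide) (by decide) (neRow _ _ _ _ (by decide))
  have d4 : f (c0,0) ≠ f (c2,0) := key c0 c2 0 0 1 A10 A12 (by decide) (by decide) (neCol _ _)
  have d5 : f (c0,0) ≠ f (c2,1) := key c0 c2 0 1 2 A10 A12 (by decide) (by decide) (neCol _ _)
  have d6 : f (c0,0) ≠ f (c2,2) := key c0 c2 0 2 1 A10 A12 (by decide) (by decide) (neCol _ _)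
  have d7 : f (c0,1) ≠ f (c2,0) := key c0 c2 1 0 2 A10 A12 (by decide) (by decide) (neCol _ _)
  have d8 : f (c0,1) ≠ f (c2,1) := key c0 c2 1 1 0 A10 A12 (by decide) (by decide) (neCol _ _)
  have d9 : f (c0,1) ≠ f (c2,2) := key c0 c2 1 2 0 A10 A12 (by decide) (by decide) (neCol _ _)
  have d10 : f (c0,2) ≠ f (c2,0) := key c0 c2 2 0 1 A10 A12 (by decide) (by decide) (neCol _ _)
  have d11 : f (c0,2) ≠ f (c2,1) := key c0 c2 2 1 0 A10 A12 (by decide) (by decide) (neCol _ _)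
  have d12 : f (c0,2) ≠ f (c2,2) := key c0 c2 2 2 0 A10 A12 (by decide) (by decide) (neCol _ _)
  have d13 : f (c2,0) ≠ f (c2,1) := key c2 c2 0 1 2 A12 A12 (by decide) (by decide) (neRow _ _ _ _ (by decide))
  have d14 : f (c2,0) ≠ f (c2,2) := key c2 c2 0 2 1 A12 A12 (by decide) (by decide) (neRow _ _ _ _ (by decide))
  have d15 : f (c2,1) ≠ f (c2,2) := key c2 c2 1 2 0 A12 A12 (by decide) (by decide) (neRow _ _ _ _ (by decide))
  have hnd : ([f (c0,0), f (c0,1), f (c0,2), f (c2,0), f (c2,1), f (c2,2)] : List (Fin k)).Nodup := by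
    simp only [List.nodup_cons, List.mem_cons, List.mem_singleton, List.not_mem_nil,
      List.nodup_nil, and_true, not_or]
    tauto
  have := hnd.length_le_card
  simpa using this

lemma lower_bound6 {s k : ℕ} (hs : 1 ≤ s) (f : Fin (4 * s) × Fin 6 → Fin k)
    (hf : ∀ v u w : Fin (4 * s) × Fin 6,
      ((cycleGraph (4 * s)).Adj v.1 u.1 ∧ (cycleGraph 6).Adj v.2 u.2) →
      ((cycleGraph (4 * s)).Adj v.1 w.1 ∧ (cycleGraph 6).Adj v.2 w.2) →
      u ≠ w → f u ≠ f w) : 6 ≤ k := by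
  have h0 : (0:ℕ) < 4 * s := by omega
  have h1 : (1:ℕ) < 4 * s := by omega
  have h2 : (2:ℕ) < 4 * s := by omega
  set c0 : Fin (4 * s) := ⟨0, h0⟩ with hc0
  set c1 : Fin (4 * s) := ⟨1, h1⟩ with hc1
  set c2 : Fin (4 * s) := ⟨2, h2⟩ with hc2
  have A10 : (cycleGraph (4 * s)).Adj c1 c0 := adj_cycle_mk 0 h1
  have A12 : (cycleGraph (4 * s)).Adj c1 c2 := (adj_cycle_mk 1 h2).symm
  have hc : c0 ≠ c2 := fun h => by simp [hc0, hc2, Fin.ext_iff] at h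
  have neRow : ∀ (a b : Fin (4 * s)) (p q : Fin 6), p ≠ q → (a, p) ≠ (b, q) :=
    fun a b p q h hh => h (congrArg Prod.snd hh)
  have neCol : ∀ (p q : Fin 6), ((c0, p) : Fin (4 * s) × Fin 6) ≠ (c2, q) :=
    fun p q hh => hc (congrArg Prod.fst hh)
  have key : ∀ (a b : Fin (4 * s)) (p q mr : Fin 6),
      (cycleGraph (4 * s)).Adj c1 a → (cycleGraph (4 * s)).Adj c1 b →
      (cycleGraph 6).Adj mr p → (cycleGraph 6).Adj mr q →
      (a, p) ≠ (b, q) → f (a, p) ≠ f (b, q) :=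
    fun a b p q mr x1 x2 x3 x4 x5 => hf (c1, mr) (a, p) (b, q) ⟨x1, x3⟩ ⟨x2, x4⟩ x5
  have d1 : f (c0,0) ≠ f (c0,2) := key c0 c0 0 2 1 A10 A10 (by decide) (by decide) (neRow _ _ _ _ (by decide))
  have d2 : f (c0,0) ≠ f (c0,4) := key c0 c0 0 4 5 A10 A10 (by decide) (by decide) (neRow _ _ _ _ (by decide))
  have d3 : f (c0,2) ≠ f (c0,4) := key c0 c0 2 4 3 A10 A10 (by decide) (by decide) (neRow _ _ _ _ (by decide))
  have d4 : f (c0,0) ≠ f (c2,0) := key c0 c2 0 0 1 A10 A12 (by decide) (by decide) (neCol _ _)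
  have d5 : f (c0,0) ≠ f (c2,2) := key c0 c2 0 2 1 A10 A12 (by decide) (by decide) (neCol _ _)
  have d6 : f (c0,0) ≠ f (c2,4) := key c0 c2 0 4 5 A10 A12 (by decide) (by decide) (neCol _ _)
  have d7 : f (c0,2) ≠ f (c2,0) := key c0 c2 2 0 1 A10 A12 (by decide) (by decide) (neCol _ _)
  have d8 : f (c0,2) ≠ f (c2,2) := key c0 c2 2 2 1 A10 A12 (by decide) (by decide) (neCol _ _)
  have d9 : f (c0,2) ≠ f (c2,4) := key c0 c2 2 4 3 A10 A12 (by decide) (by decide) (neCol _ _)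
  have d10 : f (c0,4) ≠ f (c2,0) := key c0 c2 4 0 5 A10 A12 (by decide) (by decide) (neCol _ _)
  have d11 : f (c0,4) ≠ f (c2,2) := key c0 c2 4 2 3 A10 A12 (by decide) (by decide) (neCol _ _)
  have d12 : f (c0,4) ≠ f (c2,4) := key c0 c2 4 4 3 A10 A12 (by decide) (by decide) (neCol _ _)
  have d13 : f (c2,0) ≠ f (c2,2) := key c2 c2 0 2 1 A12 A12 (by decide) (by decide) (neRow _ _ _ _ (by decide))
  have d14 : f (c2,0) ≠ f (c2,4) := key c2 c2 0 4 5 A12 A12 (by decide) (by decide) (neRow _ _ _ _ (by decide))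
  have d15 : f (c2,2) ≠ f (c2,4) := key c2 c2 2 4 3 A12 A12 (by decide) (by decide) (neRow _ _ _ _ (by decide))
  have hnd : ([f (c0,0), f (c0,2), f (c0,4), f (c2,0), f (c2,2), f (c2,4)] : List (Fin k)).Nodup := by
    simp only [List.nodup_cons, List.mem_cons, List.mem_singleton, List.not_mem_nil,
      List.nodup_nil, and_true, not_or]
    tauto
  have := hnd.length_le_card
  simpa using this

/-- for `s ≥ 1` and `n ∈ {3, 6}`, `χ_i(C_{4s} × C_n) = 6`. -/
theorem injChrom_directProd_cycles_six (s n : ℕ) (hs : 1 ≤ s)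
    (hn : n ∈ ({3, 6} : Set ℕ)) :
    injChrom (directProd (cycleGraph (4 * s)) (cycleGraph n)) = 6 := by
  have hn' : n = 3 ∨ n = 6 := hn
  rcases hn' with rfl | rfl
  · obtain ⟨f, hcol⟩ := upper_bound s 3 hs row3
    have hmem : 6 ∈ {n | ∃ f : Fin (4 * s) × Fin 3 → Fin n,
        IsInjColoring (directProd (cycleGraph (4 * s)) (cycleGraph 3)) f} := ⟨f, hcol⟩
    refine le_antisymm (Nat.sInf_le hmem) (le_csInf ⟨6, hmem⟩ ?_)
    rintro k ⟨g, hg⟩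
    exact lower_bound3 hs g fun v u w h1 h2 h3 => hg v u w h1 h2 h3
  · obtain ⟨f, hcol⟩ := upper_bound s 6 hs row6
    have hmem : 6 ∈ {n | ∃ f : Fin (4 * s) × Fin 6 → Fin n,
        IsInjColoring (directProd (cycleGraph (4 * s)) (cycleGraph 6)) f} := ⟨f, hcol⟩
    refine le_antisymm (Nat.sInf_le hmem) (le_csInf ⟨6, hmem⟩ ?_)
    rintro k ⟨g, hg⟩
    exact lower_bound6 hs g fun v u w h1 h2 h3 => hg v u w h1 h2 h3
end

section
/- The 2-distance chromatic number of the lexicographic product of the 7-cycle with the 5-cycle satisfies χ_2(C_7 ∘ C_5) ≤ 18 (in particular, χ_2(C_7 ∘ C_5) < χ_2(C_7)·|V(C_5)| = 20). -/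
open SimpleGraph Finset

variable {α β : Type*}

instance instDecD2 {V : Type*} [Fintype V] [DecidableEq V] (G : SimpleGraph V)
    [DecidableRel G.Adj] {n : ℕ} (f : V → Fin n) : Decidable (IsDistTwoColoring G f) := by
  unfold IsDistTwoColoring; infer_instance

instance instDecLexAdj {α β : Type*} (G : SimpleGraph α) (H : SimpleGraph β)
    [DecidableRel G.Adj] [DecidableRel H.Adj] [DecidableEq α] :
    DecidableRel (lexProd G H).Adj := fun x y => by
  unfold lexProd; exact inferInstanceAs (Decidable (_ ∨ _))

def tbl : Fin 7 → Fin 5 → Fin 18 :=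
  ![![0,1,2,15,16], ![10,11,12,13,14], ![5,6,7,8,9], ![0,1,2,3,4],
    ![13,14,15,16,17], ![8,9,10,11,12], ![3,4,5,6,7]]

lemma bigcol : IsDistTwoColoring (lexProd (cycleGraph 7) (cycleGraph 5))
    (fun p => tbl p.1 p.2) := by decide

lemma c7col : IsDistTwoColoring (cycleGraph 7) (![0,1,2,0,1,2,3] : Fin 7 → Fin 4) := by decide

lemma triple : ∀ a b c : Fin 7, a ≠ b → a ≠ c → b ≠ c →
    ((cycleGraph 7).Adj a b ∨ ∃ w, (cycleGraph 7).Adj a w ∧ (cycleGraph 7).Adj w b) ∨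
    ((cycleGraph 7).Adj a c ∨ ∃ w, (cycleGraph 7).Adj a w ∧ (cycleGraph 7).Adj w c) ∨
    ((cycleGraph 7).Adj b c ∨ ∃ w, (cycleGraph 7).Adj b w ∧ (cycleGraph 7).Adj w c) := by
  decide

lemma c7lb {n : ℕ} (f : Fin 7 → Fin n) (hf : IsDistTwoColoring (cycleGraph 7) f) : 4 ≤ n := by
  by_contra h
  push_neg at h
  have hn : n ≤ 3 := by omega
  set g : Fin 7 → Fin 3 := fun v => Fin.castLE hn (f v) with hg
  have hgcol : IsDistTwoColoring (cycleGraph 7) g := by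
    intro u v huv hadj heq
    exact hf u v huv hadj (Fin.castLE_injective hn heq)
  -- pigeonhole: some color class has ≥ 3 elements
  obtain ⟨c, -, hc⟩ := Finset.exists_lt_card_fiber_of_mul_lt_card_of_maps_to
    (s := (Finset.univ : Finset (Fin 7))) (t := (Finset.univ : Finset (Fin 3))) (f := g)
    (n := 2) (fun a _ => Finset.mem_univ _) (by simp)
  rw [Finset.two_lt_card] at hc
  obtain ⟨a, ha, b, hb, d, hd, hab, had, hbd⟩ := hc
  simp only [Finset.mem_filter] at ha hb hd
  rcases triple a b d hab had hbd with h1 | h1 | h1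
  · exact hgcol a b hab h1 (ha.2.trans hb.2.symm)
  · exact hgcol a d had h1 (ha.2.trans hd.2.symm)
  · exact hgcol b d hbd h1 (hb.2.trans hd.2.symm)

lemma c7chrom : distTwoChrom (cycleGraph 7) = 4 := by
  apply le_antisymm
  · exact Nat.sInf_le ⟨_, c7col⟩
  · exact le_csInf ⟨4, _, c7col⟩ (fun n ⟨f, hf⟩ => c7lb f hf)

/-- `χ₂(C₇ ∘ C₅) ≤ 18`; in particular it is smaller than
`χ₂(C₇)·|V(C₅)| = 20`. -/
theorem distTwoChrom_lexProd_C7_C5 :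
    distTwoChrom (lexProd (cycleGraph 7) (cycleGraph 5)) ≤ 18 ∧
      distTwoChrom (lexProd (cycleGraph 7) (cycleGraph 5)) <
        distTwoChrom (cycleGraph 7) * Fintype.card (Fin 5) ∧
      distTwoChrom (cycleGraph 7) * Fintype.card (Fin 5) = 20 := by
  have h18 : distTwoChrom (lexProd (cycleGraph 7) (cycleGraph 5)) ≤ 18 :=
    Nat.sInf_le ⟨_, bigcol⟩
  have h20 : distTwoChrom (cycleGraph 7) * Fintype.card (Fin 5) = 20 := by
    rw [c7chrom]; simp
  exact ⟨h18, by omega, h20⟩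
end
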